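/- arXiv:1611.04707 — 2 statements merged into one kernel-verified Lean document; each statement's English description precedes it below -/
import Mathlib

section
/- With the notation and hypotheses of the Rieffel induction construction (V, W full Hilbert modules over locally C*-algebras A, B; E a Hilbert B-module; Ψ : A → L_B(E) non-degenerate continuous *-morphism; Φ : W → B(H,K) a non-degenerate representation with associated representation φ), the map _E^V Φ : V → B(_EH, _{V⊗_Ψ E}H) satisfies (_E^V Φ(v))* (_E^V Φ(v')) = _E^A φ(⟨v, v'⟩) for all v, v' ∈ V, where _E^A φ : A → B(_EH) is the Rieffel induced representation of A given by _E^A φ(a)(x⊗h) = Ψ(a)x ⊗ h. In particular, _E^V Φ is a representation of the Hilbert A-module V. -/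
noncomputable section
open scoped ComplexOrder RightActions
open ContinuousLinearMap (adjoint)

/-- A (continuous) C*-seminorm on a complex *-algebra: a seminorm which is
submultiplicative and satisfies the C*-identity. -/
structure CStarSeminormOn (A : Type*) [NonUnitalRing A] [StarRing A] [Module ℂ A] extends
    Seminorm ℂ A where
  mul_le' : ∀ a b : A, toSeminorm (a * b) ≤ toSeminorm a * toSeminorm b
  star_mul_self' : ∀ a : A, toSeminorm (star a * a) = toSeminorm a ^ 2

/-- The data of a (right) Hilbert module over a locally C*-algebra `A`: a right
`A`-module with an `A`-valued inner product which is `A`-linear in the second variable,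
hermitian, positive and definite. -/
structure HilbertModuleData (A : Type*) [NonUnitalRing A] [StarRing A] [Module ℂ A]
    [TopologicalSpace A] (E : Type*) [AddCommGroup E] [Module ℂ E] where
  smul : E → A → E
  inner : E → E → A
  add_smul' : ∀ x y a, smul (x + y) a = smul x a + smul y a
  smul_add' : ∀ x a b, smul x (a + b) = smul x a + smul x b
  smul_mul' : ∀ x a b, smul (smul x a) b = smul x (a * b)
  smul_complex : ∀ (c : ℂ) x a, smul (c • x) a = c • smul x a
  inner_add_right : ∀ x y z, inner x (y + z) = inner x y + inner x z
  inner_smul_right : ∀ x y a, inner x (smul y a) = inner x y * a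
  inner_smul_complex : ∀ (c : ℂ) x y, inner x (c • y) = c • inner x y
  star_inner : ∀ x y, star (inner x y) = inner y x
  inner_self_nonneg : ∀ x, inner x x ∈ closure {a : A | ∃ b, a = star b * b}
  inner_self_eq_zero : ∀ x, inner x x = 0 → x = 0

/-- A C*-algebra bundled with a compatible partial order. -/
structure BundledCStarAlg : Type 1 where
  carrier : Type
  [inst : NonUnitalCStarAlgebra carrier]
  [instOrder : PartialOrder carrier]
  [instSOR : StarOrderedRing carrier]

attribute [instance] BundledCStarAlg.inst BundledCStarAlg.instOrder BundledCStarAlg.instSOR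

/-- The December 2024 Mathlib `CStarModule` (right modules, `SMul Aᵐᵒᵖ E`), which has
since changed meaning in Mathlib (now left modules). -/
class CStarModuleOld (A E : Type*) [NonUnitalSemiring A] [StarRing A]
    [Module ℂ A] [AddCommGroup E] [Module ℂ E] [PartialOrder A] [SMul Aᵐᵒᵖ E] [Norm A] [Norm E]
    extends Inner A E where
  inner_add_right {x} {y} {z} : inner x (y + z) = inner x y + inner x z
  inner_self_nonneg {x} : 0 ≤ inner x x
  inner_self {x} : inner x x = 0 ↔ x = 0
  inner_op_smul_right {a : A} {x y : E} : inner x (y <• a) = inner x y * a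
  inner_smul_right_complex {z : ℂ} {x} {y} : inner x (z • y) = z • inner x y
  star_inner x y : star (inner x y) = inner y x
  norm_eq_sqrt_norm_inner_self x : ‖x‖ = Real.sqrt ‖inner x x‖

/-- A bundled Hilbert C*-module over a bundled C*-algebra. -/
structure BundledCStarModule (C : BundledCStarAlg) : Type 1 where
  carrier : Type
  [instGroup : NormedAddCommGroup carrier]
  [instModC : NormedSpace ℂ carrier]
  [instSMul : SMul C.carrierᵐᵒᵖ carrier]
  [instMod : CStarModuleOld C.carrier carrier]
  [instComplete : CompleteSpace carrier]

attribute [instance] BundledCStarModule.instGroup BundledCStarModule.instModC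
  BundledCStarModule.instSMul BundledCStarModule.instMod BundledCStarModule.instComplete

/-- `π : A → C` realizes the C*-algebra `C` as the quotient `A_p = A/N_p` of `A` by the
kernel of the C*-seminorm `p`, with the norm induced by `p`. -/
structure IsQuotientHom {A : Type*} [NonUnitalRing A] [StarRing A] [Module ℂ A]
    (p : A → ℝ) (C : BundledCStarAlg) (π : A → C.carrier) : Prop where
  surj : Function.Surjective π
  map_add : ∀ a b, π (a + b) = π a + π b
  map_mul : ∀ a b, π (a * b) = π a * π b
  map_smul : ∀ (c : ℂ) (a : A), π (c • a) = c • π a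
  map_star : ∀ a, π (star a) = star (π a)
  norm_eq : ∀ a, ‖π a‖ = p a

/-- `σ : E → F` realizes the Hilbert C*-module `F` over `C` as the quotient
`E_p = E/N_p^E` of the Hilbert module `E`, compatibly with the quotient map `π : A → C`. -/
structure IsQuotientModuleMap {A : Type*} [NonUnitalRing A] [StarRing A] [Module ℂ A]
    [TopologicalSpace A] {E : Type*} [AddCommGroup E] [Module ℂ E]
    (M : HilbertModuleData A E) {C : BundledCStarAlg} (π : A → C.carrier)
    (F : BundledCStarModule C) (σ : E → F.carrier) : Prop where
  surj : Function.Surjective σ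
  map_add : ∀ x y, σ (x + y) = σ x + σ y
  map_smulC : ∀ (c : ℂ) x, σ (c • x) = c • σ x
  map_smul : ∀ x a, σ (M.smul x a) = σ x <• (π a)
  map_inner : ∀ x y, (inner C.carrier (σ x) (σ y) : C.carrier) = π (M.inner x y)

/-- The Rieffel induced representation `_E^V Φ` of `V` satisfies
`(_E^V Φ(v))* (_E^V Φ(v')) = _E^A φ(⟨v,v'⟩)`, where `_E^A φ` is the Rieffel induced
representation of `A` on `_EH` determined by `_E^A φ(a)(x⊗h) = Ψ(a)x ⊗ h`; in
particular `_E^V Φ` is a representation of the Hilbert `A`-module `V`. -/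
theorem stmt_8
    -- `A` and `B` are locally C*-algebras:
    {A : Type*} [NonUnitalRing A] [StarRing A] [Module ℂ A]
    [UniformSpace A] [IsUniformAddGroup A] [T2Space A] [CompleteSpace A]
    {ιA : Type*} [Nonempty ιA] (SA : ιA → CStarSeminormOn A)
    (hA : WithSeminorms fun i => (SA i).toSeminorm)
    {B : Type*} [NonUnitalRing B] [StarRing B] [Module ℂ B]
    [UniformSpace B] [IsUniformAddGroup B] [T2Space B] [CompleteSpace B]
    {ιB : Type*} [Nonempty ιB] (SB : ιB → CStarSeminormOn B)
    (hB : WithSeminorms fun i => (SB i).toSeminorm)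
    -- `V` is a full Hilbert `A`-module and `W` is a full Hilbert `B`-module:
    {V : Type*} [AddCommGroup V] [Module ℂ V] (MV : HilbertModuleData A V)
    (hVfull : Dense ((Submodule.span ℂ
      (Set.range fun q : V × V => MV.inner q.1 q.2) : Submodule ℂ A) : Set A))
    {W : Type*} [AddCommGroup W] [Module ℂ W] (MW : HilbertModuleData B W)
    (hWfull : Dense ((Submodule.span ℂ
      (Set.range fun q : W × W => MW.inner q.1 q.2) : Submodule ℂ B) : Set B))
    -- `E` is a Hilbert `B`-module and `Ψ : A → L_B(E)` is a *-morphism: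
    {E : Type*} [AddCommGroup E] [Module ℂ E] [TopologicalSpace E]
    (ME : HilbertModuleData B E)
    (Ψ : A → E → E)
    (hΨ_addA : ∀ a a' x, Ψ (a + a') x = Ψ a x + Ψ a' x)
    (hΨ_addE : ∀ a x y, Ψ a (x + y) = Ψ a x + Ψ a y)
    (hΨ_smul : ∀ (c : ℂ) a x, Ψ (c • a) x = c • Ψ a x)
    (hΨ_mul : ∀ a a' x, Ψ (a * a') x = Ψ a (Ψ a' x))
    (hΨ_adj : ∀ a x y, ME.inner (Ψ a x) y = ME.inner x (Ψ (star a) y))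
    (hΨ_mod : ∀ a x b, Ψ a (ME.smul x b) = ME.smul (Ψ a x) b)
    -- `Ψ` is non-degenerate:
    (hΨ_nondeg : Dense ((Submodule.span ℂ
      (Set.range fun q : A × E => Ψ q.1 q.2) : Submodule ℂ E) : Set E))
    -- `Φ : W → B(H,K)` is a non-degenerate representation of `W` with associated
    -- representation `φ` of `B`:
    {H Ks : Type*}
    [NormedAddCommGroup H] [InnerProductSpace ℂ H] [CompleteSpace H]
    [NormedAddCommGroup Ks] [InnerProductSpace ℂ Ks] [CompleteSpace Ks]
    (φ : B → (H →L[ℂ] H))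
    (hφ_add : ∀ b b', φ (b + b') = φ b + φ b')
    (hφ_mul : ∀ b b', φ (b * b') = φ b ∘L φ b')
    (hφ_smul : ∀ (c : ℂ) b, φ (c • b) = c • φ b)
    (hφ_star : ∀ b, φ (star b) = adjoint (φ b))
    (Φ : W → (H →L[ℂ] Ks))
    (hΦ : ∀ x y : W, adjoint (Φ x) ∘L Φ y = φ (MW.inner x y))
    (hΦnd : Dense ((Submodule.span ℂ
      (Set.range fun q : W × H => Φ q.1 q.2) : Submodule ℂ Ks) : Set Ks))
    (hΦnd' : Dense ((Submodule.span ℂ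
      (Set.range fun q : W × Ks => adjoint (Φ q.1) q.2) : Submodule ℂ H) : Set H))
    -- the induced Hilbert space `_EH`, with `em x h = [x ⊗ h]`:
    {EH : Type*} [NormedAddCommGroup EH] [InnerProductSpace ℂ EH] [CompleteSpace EH]
    (em : E → H → EH)
    (hem_addE : ∀ x y h, em (x + y) h = em x h + em y h)
    (hem_addH : ∀ x h k, em x (h + k) = em x h + em x k)
    (hem_smul : ∀ (c : ℂ) x h, em x (c • h) = c • em x h)
    (hem_inner : ∀ (x y : E) (h k : H),
      (inner ℂ (em x h) (em y k) : ℂ) = (inner ℂ h (φ (ME.inner x y) k) : ℂ))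
    (hem_dense : Dense ((Submodule.span ℂ
      (Set.range fun q : E × H => em q.1 q.2) : Submodule ℂ EH) : Set EH))
    -- the induced Hilbert space `_{V⊗_Ψ E}H`, with `em2 v x h = [v ⊗ x ⊗ h]`:
    {VEH : Type*} [NormedAddCommGroup VEH] [InnerProductSpace ℂ VEH] [CompleteSpace VEH]
    (em2 : V → E → H → VEH)
    (hem2_addV : ∀ v v' x h, em2 (v + v') x h = em2 v x h + em2 v' x h)
    (hem2_addE : ∀ v x y h, em2 v (x + y) h = em2 v x h + em2 v y h)
    (hem2_addH : ∀ v x h k, em2 v x (h + k) = em2 v x h + em2 v x k)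
    (hem2_smul : ∀ (c : ℂ) v x h, em2 v x (c • h) = c • em2 v x h)
    (hem2_inner : ∀ (v v' : V) (x x' : E) (h k : H),
      (inner ℂ (em2 v x h) (em2 v' x' k) : ℂ) =
        (inner ℂ h (φ (ME.inner x (Ψ (MV.inner v v') x')) k) : ℂ))
    (hem2_dense : Dense ((Submodule.span ℂ
      (Set.range fun q : V × E × H => em2 q.1 q.2.1 q.2.2) : Submodule ℂ VEH) : Set VEH))
    -- the Rieffel induced representation `_E^V Φ` of `V`:
    (η : V → (EH →L[ℂ] VEH))
    (hη : ∀ (v : V) (x : E) (h : H), η v (em x h) = em2 v x h)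
    -- the Rieffel induced representation `_E^A φ` of `A`:
    (ρ : A → (EH →L[ℂ] EH))
    (hρ : ∀ (a : A) (x : E) (h : H), ρ a (em x h) = em (Ψ a x) h) :
    ∀ v v' : V, adjoint (η v) ∘L η v' = ρ (MV.inner v v') := by
  intro v v'
  apply ContinuousLinearMap.ext_on hem_dense
  rintro _ ⟨⟨y, k⟩, rfl⟩
  apply Dense.eq_of_inner_right ℂ hem_dense
  intro ξ hξ
  induction hξ using Submodule.span_induction with
  | mem u hu =>
    obtain ⟨⟨x, h⟩, rfl⟩ := hu
    simp only [ContinuousLinearMap.comp_apply, ContinuousLinearMap.adjoint_inner_right,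
      hη, hρ, hem2_inner, hem_inner]
  | zero => simp
  | add u w _ _ hu hw => simp only [inner_add_left, hu, hw]
  | smul c u _ hu => simp only [inner_smul_left, hu]
end
end

section
/- Let A, B be locally C*-algebras, V a full Hilbert A-module, W a full Hilbert B-module, E a Hilbert B-module, Ψ : A → L_B(E) a non-degenerate continuous *-morphism, and Φ : W → B(H,K) a non-degenerate representation of W. Let q ∈ S(B) with associated non-degenerate representation φ_q of B_q, and let p ∈ S(A) with q̃(Ψ(a)) ≤ p(a) for all a ∈ A. Then the map v ⊗ x ⊗ h ↦ σ_p^V(v) ⊗ σ_q^E(x) ⊗ h extends to a unitary U₂ : _{V⊗_Ψ E}H → _{V_p ⊗_{Ψ_p} E_q}H, and together with the unitary U₁ : _EH → _{E_q}H (extending x⊗h ↦ σ_q^E(x)⊗h) one has U₂ ∘ (_E^V Φ)(v) = (_{E_q}^{V_p} Φ_q)(σ_p^V(v)) ∘ U₁ for all v ∈ V; hence the representations _E^V Φ and _{E_q}^{V_p} Φ_q ∘ σ_p^V of V are unitarily equivalent. -/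
noncomputable section
open scoped ComplexOrder RightActions
open ContinuousLinearMap (adjoint)

set_option maxHeartbeats 1000000 in
/-- The Rieffel induced representations `_E^V Φ` and `_{E_q}^{V_p} Φ_q ∘ σ_p^V` of `V`
are unitarily equivalent: there is a unitary `U₂ : _{V⊗_Ψ E}H ≃ _{V_p⊗_{Ψ_p} E_q}H`
extending `v ⊗ x ⊗ h ↦ σ_p(v) ⊗ σ_q(x) ⊗ h` with
`U₂ ∘ (_E^V Φ)(v) = (_{E_q}^{V_p} Φ_q)(σ_p v) ∘ U₁`. -/
theorem stmt_12
    -- `A` and `B` are locally C*-algebras: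
    {A : Type*} [NonUnitalRing A] [StarRing A] [Module ℂ A]
    [UniformSpace A] [IsUniformAddGroup A] [T2Space A] [CompleteSpace A]
    {ιA : Type*} [Nonempty ιA] (SA : ιA → CStarSeminormOn A)
    (hA : WithSeminorms fun i => (SA i).toSeminorm)
    {B : Type*} [NonUnitalRing B] [StarRing B] [Module ℂ B]
    [UniformSpace B] [IsUniformAddGroup B] [T2Space B] [CompleteSpace B]
    {ιB : Type*} [Nonempty ιB] (SB : ιB → CStarSeminormOn B)
    (hB : WithSeminorms fun i => (SB i).toSeminorm)
    -- `V` is a full Hilbert `A`-module and `W` is a full Hilbert `B`-module: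
    {V : Type*} [AddCommGroup V] [Module ℂ V] (MV : HilbertModuleData A V)
    (hVfull : Dense ((Submodule.span ℂ
      (Set.range fun q : V × V => MV.inner q.1 q.2) : Submodule ℂ A) : Set A))
    {W : Type*} [AddCommGroup W] [Module ℂ W] (MW : HilbertModuleData B W)
    (hWfull : Dense ((Submodule.span ℂ
      (Set.range fun q : W × W => MW.inner q.1 q.2) : Submodule ℂ B) : Set B))
    -- `E` is a Hilbert `B`-module and `Ψ : A → L_B(E)` is a *-morphism:
    {E : Type*} [AddCommGroup E] [Module ℂ E] [TopologicalSpace E]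
    (ME : HilbertModuleData B E)
    (Ψ : A → E → E)
    (hΨ_addA : ∀ a a' x, Ψ (a + a') x = Ψ a x + Ψ a' x)
    (hΨ_addE : ∀ a x y, Ψ a (x + y) = Ψ a x + Ψ a y)
    (hΨ_smul : ∀ (c : ℂ) a x, Ψ (c • a) x = c • Ψ a x)
    (hΨ_mul : ∀ a a' x, Ψ (a * a') x = Ψ a (Ψ a' x))
    (hΨ_adj : ∀ a x y, ME.inner (Ψ a x) y = ME.inner x (Ψ (star a) y))
    (hΨ_mod : ∀ a x b, Ψ a (ME.smul x b) = ME.smul (Ψ a x) b)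
    -- `Ψ` is non-degenerate:
    (hΨ_nondeg : Dense ((Submodule.span ℂ
      (Set.range fun q : A × E => Ψ q.1 q.2) : Submodule ℂ E) : Set E))
    -- `Φ : W → B(H,K)` is a non-degenerate representation of `W` with associated
    -- representation `φ` of `B`:
    {H Ks : Type*}
    [NormedAddCommGroup H] [InnerProductSpace ℂ H] [CompleteSpace H]
    [NormedAddCommGroup Ks] [InnerProductSpace ℂ Ks] [CompleteSpace Ks]
    (φ : B → (H →L[ℂ] H))
    (hφ_add : ∀ b b', φ (b + b') = φ b + φ b')
    (hφ_mul : ∀ b b', φ (b * b') = φ b ∘L φ b')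
    (hφ_smul : ∀ (c : ℂ) b, φ (c • b) = c • φ b)
    (hφ_star : ∀ b, φ (star b) = adjoint (φ b))
    (Φ : W → (H →L[ℂ] Ks))
    (hΦ : ∀ x y : W, adjoint (Φ x) ∘L Φ y = φ (MW.inner x y))
    (hΦnd : Dense ((Submodule.span ℂ
      (Set.range fun q : W × H => Φ q.1 q.2) : Submodule ℂ Ks) : Set Ks))
    (hΦnd' : Dense ((Submodule.span ℂ
      (Set.range fun q : W × Ks => adjoint (Φ q.1) q.2) : Submodule ℂ H) : Set H))
    -- the induced Hilbert space `_EH`, with `em x h = [x ⊗ h]`: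
    {EH : Type*} [NormedAddCommGroup EH] [InnerProductSpace ℂ EH] [CompleteSpace EH]
    (em : E → H → EH)
    (hem_addE : ∀ x y h, em (x + y) h = em x h + em y h)
    (hem_addH : ∀ x h k, em x (h + k) = em x h + em x k)
    (hem_smul : ∀ (c : ℂ) x h, em x (c • h) = c • em x h)
    (hem_inner : ∀ (x y : E) (h k : H),
      (inner ℂ (em x h) (em y k) : ℂ) = (inner ℂ h (φ (ME.inner x y) k) : ℂ))
    (hem_dense : Dense ((Submodule.span ℂ
      (Set.range fun q : E × H => em q.1 q.2) : Submodule ℂ EH) : Set EH))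
    -- the induced Hilbert space `_{V⊗_Ψ E}H`, with `em2 v x h = [v ⊗ x ⊗ h]`:
    {VEH : Type*} [NormedAddCommGroup VEH] [InnerProductSpace ℂ VEH] [CompleteSpace VEH]
    (em2 : V → E → H → VEH)
    (hem2_addV : ∀ v v' x h, em2 (v + v') x h = em2 v x h + em2 v' x h)
    (hem2_addE : ∀ v x y h, em2 v (x + y) h = em2 v x h + em2 v y h)
    (hem2_addH : ∀ v x h k, em2 v x (h + k) = em2 v x h + em2 v x k)
    (hem2_smul : ∀ (c : ℂ) v x h, em2 v x (c • h) = c • em2 v x h)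
    (hem2_inner : ∀ (v v' : V) (x x' : E) (h k : H),
      (inner ℂ (em2 v x h) (em2 v' x' k) : ℂ) =
        (inner ℂ h (φ (ME.inner x (Ψ (MV.inner v v') x')) k) : ℂ))
    (hem2_dense : Dense ((Submodule.span ℂ
      (Set.range fun q : V × E × H => em2 q.1 q.2.1 q.2.2) : Submodule ℂ VEH) : Set VEH))
    -- `q ∈ S(B)` dominates `φ`; quotient data `B_q`, `E_q`, and `φ_q`:
    (q : CStarSeminormOn B) (hq : Continuous fun b => q.toSeminorm b)
    (hnorm : ∀ b : B, ‖φ b‖ ≤ q.toSeminorm b)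
    (Cq : BundledCStarAlg) (πq : B → Cq.carrier)
    (hπq : IsQuotientHom (fun b => q.toSeminorm b) Cq πq)
    (Eq' : BundledCStarModule Cq) (σq : E → Eq'.carrier)
    (hσq : IsQuotientModuleMap ME πq Eq' σq)
    (φq : Cq.carrier → (H →L[ℂ] H)) (hφq : ∀ b : B, φq (πq b) = φ b)
    (hφq_nondeg : Dense ((Submodule.span ℂ
      (Set.range fun s : Cq.carrier × H => φq s.1 s.2) : Submodule ℂ H) : Set H))
    -- `p ∈ S(A)` with `q̃(Ψ(a)) ≤ p(a)`; quotient data `A_p`, `V_p`, and `Ψ_p`: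
    (p : CStarSeminormOn A) (hp : Continuous fun a => p.toSeminorm a)
    (hbound : ∀ (a : A) (x : E), ‖σq (Ψ a x)‖ ≤ p.toSeminorm a * ‖σq x‖)
    (Cp : BundledCStarAlg) (πp : A → Cp.carrier)
    (hπp : IsQuotientHom (fun a => p.toSeminorm a) Cp πp)
    (Vp : BundledCStarModule Cp) (σp : V → Vp.carrier)
    (hσp : IsQuotientModuleMap MV πp Vp σp)
    (Ψp : Cp.carrier → (Eq'.carrier →L[ℂ] Eq'.carrier))
    (hΨp : ∀ (a : A) (x : E), Ψp (πp a) (σq x) = σq (Ψ a x))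
    -- the induced Hilbert space `_{E_q}H`:
    {EqH : Type*} [NormedAddCommGroup EqH] [InnerProductSpace ℂ EqH] [CompleteSpace EqH]
    (emq : Eq'.carrier → H → EqH)
    (hemq_addE : ∀ u w h, emq (u + w) h = emq u h + emq w h)
    (hemq_addH : ∀ u h k, emq u (h + k) = emq u h + emq u k)
    (hemq_smul : ∀ (c : ℂ) u h, emq u (c • h) = c • emq u h)
    (hemq_inner : ∀ (u w : Eq'.carrier) (h k : H),
      (inner ℂ (emq u h) (emq w k) : ℂ) = (inner ℂ h (φq (inner Cq.carrier u w : Cq.carrier) k) : ℂ))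
    (hemq_dense : Dense ((Submodule.span ℂ
      (Set.range fun s : Eq'.carrier × H => emq s.1 s.2) : Submodule ℂ EqH) : Set EqH))
    -- the induced Hilbert space `_{V_p ⊗_{Ψ_p} E_q}H`:
    {VpEqH : Type*} [NormedAddCommGroup VpEqH] [InnerProductSpace ℂ VpEqH]
    [CompleteSpace VpEqH]
    (em2q : Vp.carrier → Eq'.carrier → H → VpEqH)
    (hem2q_addV : ∀ u u' w h, em2q (u + u') w h = em2q u w h + em2q u' w h)
    (hem2q_addE : ∀ u w w' h, em2q u (w + w') h = em2q u w h + em2q u w' h)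
    (hem2q_addH : ∀ u w h k, em2q u w (h + k) = em2q u w h + em2q u w k)
    (hem2q_smul : ∀ (c : ℂ) u w h, em2q u w (c • h) = c • em2q u w h)
    (hem2q_inner : ∀ (u u' : Vp.carrier) (w w' : Eq'.carrier) (h k : H),
      (inner ℂ (em2q u w h) (em2q u' w' k) : ℂ) =
        (inner ℂ h (φq (inner Cq.carrier w (Ψp (inner Cp.carrier u u' : Cp.carrier) w') : Cq.carrier) k) : ℂ))
    (hem2q_dense : Dense ((Submodule.span ℂ
      (Set.range fun s : Vp.carrier × Eq'.carrier × H => em2q s.1 s.2.1 s.2.2) :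
        Submodule ℂ VpEqH) : Set VpEqH))
    -- the induced representations `_E^V Φ` and `_{E_q}^{V_p} Φ_q`:
    (η : V → (EH →L[ℂ] VEH))
    (hη : ∀ (v : V) (x : E) (h : H), η v (em x h) = em2 v x h)
    (ηq : Vp.carrier → (EqH →L[ℂ] VpEqH))
    (hηq : ∀ (u : Vp.carrier) (w : Eq'.carrier) (h : H), ηq u (emq w h) = em2q u w h)
    -- the unitary `U₁ : _EH ≃ _{E_q}H`:
    (U₁ : EH ≃ₗᵢ[ℂ] EqH) (hU₁ : ∀ (x : E) (h : H), U₁ (em x h) = emq (σq x) h) :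
    ∃ U₂ : VEH ≃ₗᵢ[ℂ] VpEqH,
      (∀ (v : V) (x : E) (h : H), U₂ (em2 v x h) = em2q (σp v) (σq x) h) ∧
      (∀ (v : V) (ξ : EH), U₂ (η v ξ) = ηq (σp v) (U₁ ξ)) := by
  classical
  -- the generator maps
  set f : V × E × H → VEH := fun t => em2 t.1 t.2.1 t.2.2 with hf
  set g : V × E × H → VpEqH := fun t => em2q (σp t.1) (σq t.2.1) t.2.2 with hg
  -- Gram matrices agree
  have hGram : ∀ t t' : V × E × H, (inner ℂ (f t) (f t') : ℂ) = inner ℂ (g t) (g t') := by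
    rintro ⟨v, x, h⟩ ⟨v', x', k⟩
    simp only [hf, hg, hem2_inner, hem2q_inner, hσp.map_inner, hΨp, hσq.map_inner, hφq]
  set L : ((V × E × H) →₀ ℂ) →ₗ[ℂ] VEH := Finsupp.linearCombination ℂ f with hL
  set L' : ((V × E × H) →₀ ℂ) →ₗ[ℂ] VpEqH := Finsupp.linearCombination ℂ g with hL'
  have hinner : ∀ s t : (V × E × H) →₀ ℂ, (inner ℂ (L s) (L t) : ℂ) = inner ℂ (L' s) (L' t) := by
    intro s t
    simp only [hL, hL', Finsupp.linearCombination_apply, Finsupp.sum, sum_inner, inner_sum,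
      inner_smul_left, inner_smul_right, hGram]
  have hnorm_eq : ∀ s, ‖L s‖ = ‖L' s‖ := by
    intro s
    rw [@norm_eq_sqrt_re_inner ℂ, @norm_eq_sqrt_re_inner ℂ, hinner]
  have hker : LinearMap.ker L ≤ LinearMap.ker L' := by
    intro s hs
    rw [LinearMap.mem_ker] at hs ⊢
    have := hnorm_eq s
    rw [hs, norm_zero] at this
    exact norm_eq_zero.mp this.symm
  -- the linear map on the range of `L`
  set T : ↥(LinearMap.range L) →ₗ[ℂ] VpEqH :=
    (LinearMap.ker L).liftQ L' hker ∘ₗ (L.quotKerEquivRange.symm : _ →ₗ[ℂ] _) with hT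
  have hTL : ∀ s, T ⟨L s, LinearMap.mem_range_self L s⟩ = L' s := by
    intro s
    have h1 : L.quotKerEquivRange (Submodule.Quotient.mk s) = ⟨L s, LinearMap.mem_range_self L s⟩ := by
      apply Subtype.ext
      exact L.quotKerEquivRange_apply_mk s
    have h2 : L.quotKerEquivRange.symm ⟨L s, LinearMap.mem_range_self L s⟩ =
        Submodule.Quotient.mk s := by rw [← h1, LinearEquiv.symm_apply_apply]
    simp only [hT, LinearMap.comp_apply, LinearEquiv.coe_coe, h2]
    rfl
  have hTnorm : ∀ x : ↥(LinearMap.range L), ‖T x‖ = ‖x‖ := by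
    rintro ⟨x, hx⟩
    obtain ⟨s, rfl⟩ := hx
    rw [hTL s, ← hnorm_eq]
    rfl
  set Ti : ↥(LinearMap.range L) →ₗᵢ[ℂ] VpEqH := ⟨T, hTnorm⟩ with hTi
  -- density of the range of `L`
  have hrange : (LinearMap.range L : Set VEH) = (Submodule.span ℂ (Set.range f) : Set VEH) := by
    rw [hL, Finsupp.range_linearCombination]
  have hdense : Dense (LinearMap.range L : Set VEH) := by
    rw [hrange]
    exact hem2_dense
  -- extend to all of VEH
  set e : ↥(LinearMap.range L) →L[ℂ] VEH := (LinearMap.range L).subtypeL with he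
  have hedense : DenseRange e := by
    rw [he]
    exact hdense.denseRange_val
  have heui : IsUniformInducing e := isometry_subtype_coe.isUniformInducing
  set Text : VEH →L[ℂ] VpEqH := Ti.toContinuousLinearMap.extend e with hText
  have hTexte : ∀ x : ↥(LinearMap.range L), Text x = Ti x := fun x =>
    ContinuousLinearMap.extend_eq _ hedense heui x
  have hTextnorm : ∀ x : VEH, ‖Text x‖ = ‖x‖ := by
    have hcl : IsClosed {x : VEH | ‖Text x‖ = ‖x‖} :=
      isClosed_eq (continuous_norm.comp Text.continuous) continuous_norm
    have hsub : (LinearMap.range L : Set VEH) ⊆ {x : VEH | ‖Text x‖ = ‖x‖} := by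
      rintro x hx
      have : Text x = Ti ⟨x, hx⟩ := hTexte ⟨x, hx⟩
      simp only [Set.mem_setOf_eq, this]
      rw [Ti.norm_map]
      rfl
    have : Dense {x : VEH | ‖Text x‖ = ‖x‖} := hdense.mono hsub
    intro x
    have := hcl.closure_eq ▸ this.closure_eq
    exact (Set.eq_univ_iff_forall.mp this x)
  set Tfull : VEH →ₗᵢ[ℂ] VpEqH := ⟨Text.toLinearMap, hTextnorm⟩ with hTfull
  -- key: value on generators
  have hkey : ∀ (v : V) (x : E) (h : H), Tfull (em2 v x h) = em2q (σp v) (σq x) h := by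
    intro v x h
    have h1 : em2 v x h = L (Finsupp.single (v, x, h) 1) := by
      simp [hL, hf, Finsupp.linearCombination_single]
    have h2 : em2q (σp v) (σq x) h = L' (Finsupp.single (v, x, h) 1) := by
      simp [hL', hg, Finsupp.linearCombination_single]
    have h3 : Tfull (em2 v x h) = Ti ⟨L (Finsupp.single (v, x, h) 1),
        LinearMap.mem_range_self L _⟩ := by
      rw [h1]
      exact hTexte ⟨L (Finsupp.single (v, x, h) 1), LinearMap.mem_range_self L _⟩
    rw [h3, h2]
    exact hTL _
  -- surjectivity
  have hsurj : Function.Surjective Tfull := by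
    have hclosed : IsClosed (Set.range Tfull) :=
      (Tfull.isometry.isClosedEmbedding.isClosed_range)
    have hspan : (Submodule.span ℂ
        (Set.range fun s : Vp.carrier × Eq'.carrier × H => em2q s.1 s.2.1 s.2.2) : Set VpEqH)
        ⊆ Set.range Tfull := by
      have hgen : (Set.range fun s : Vp.carrier × Eq'.carrier × H => em2q s.1 s.2.1 s.2.2)
          ⊆ (LinearMap.range Tfull.toLinearMap : Set VpEqH) := by
        rintro _ ⟨⟨u, w, h⟩, rfl⟩
        obtain ⟨v, rfl⟩ := hσp.surj u
        obtain ⟨x, rfl⟩ := hσq.surj w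
        exact ⟨em2 v x h, hkey v x h⟩
      have := Submodule.span_le.mpr hgen
      intro y hy
      exact this hy
    have : Dense (Set.range Tfull) := hem2q_dense.mono hspan
    intro y
    have huniv := hclosed.closure_eq ▸ this.closure_eq
    exact Set.eq_univ_iff_forall.mp huniv y
  refine ⟨LinearIsometryEquiv.ofSurjective Tfull hsurj, ?_, ?_⟩
  · intro v x h
    rw [LinearIsometryEquiv.coe_ofSurjective]
    exact hkey v x h
  · intro v ξ
    set U₂ := LinearIsometryEquiv.ofSurjective Tfull hsurj with hU₂
    have hU₂c : ∀ z, U₂ z = Tfull z := fun z => by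
      rw [hU₂, LinearIsometryEquiv.coe_ofSurjective]
    -- both sides are continuous linear maps in ξ agreeing on a dense spanning set
    have : (U₂.toLinearIsometry.toContinuousLinearMap.comp (η v)) =
        ((ηq (σp v)).comp U₁.toLinearIsometry.toContinuousLinearMap) := by
      apply ContinuousLinearMap.ext_on hem_dense
      rintro _ ⟨⟨x, h⟩, rfl⟩
      simp only [ContinuousLinearMap.comp_apply, LinearIsometry.coe_toContinuousLinearMap,
        LinearIsometryEquiv.coe_toLinearIsometry]
      rw [hη v x h, hU₂c, hkey, hU₁, hηq]
    have h4 := ContinuousLinearMap.ext_iff.mp this ξ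
    simpa only [ContinuousLinearMap.comp_apply, LinearIsometry.coe_toContinuousLinearMap,
      LinearIsometryEquiv.coe_toLinearIsometry] using h4
end
end
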